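/- Let W be a subspace in the big cell of the Sato Grassmannian, and let (a_k)_{k≥0} be a sequence in ℂ((z⁻¹)) with deg a_k ≤ −1 for all k, defining the endomorphism A·f := Σ_{k≥0} a_k·(d/dz)^k f of H. If A(W) ⊆ W, then A = 0, i.e. a_k = 0 for all k. (For any point of the big cell there are no nontrivial Kac–Schwarz operators in 𝒟₋.) -/

import Mathlib

/-!
Give `z^m (d/dz)^k` the weight `m - k`, so that the coefficient of `z^(k-j)` in `a_k` is the
weight `-j` part of `A`; by `deg a_k ≤ -1` all weights are negative. We kill the weights one at a
time, `-j` for `j = 0, 1, 2, …`. Once all weights of `A` are `≤ -j`, `A` lowers degrees by `j`.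
Pick `w_n ∈ W` with `π₊ w_n = z^n`, i.e. `w_n = z^n + O(z⁻¹)`. For `n < j` the element `A w_n` of
`W` has negative degree, so `A w_n = 0` by injectivity of `π₊` on `W`. Reading off the coefficient
of `z^(n-j)` gives `∑_{k ≤ n} n (n-1) ⋯ (n-k+1) c_k = 0` for the weight `-j` coefficients `c_k`,
while `c_k = 0` for `k ≥ j` because `deg a_k ≤ -1`. This system is unitriangular, so all `c_k`
vanish.
-/

noncomputable section

/-- `H = ℂ((z⁻¹))`: formal Laurent series in `u = z⁻¹`. -/
abbrev H : Type := LaurentSeries ℂ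

/-- The coefficient of `z^k` of a Laurent series in `z⁻¹`. -/
def zc (f : H) (k : ℤ) : ℂ := f.coeff (-k)

/-- `deg_z f ≤ d`: all coefficients of `z^k` with `k > d` vanish. -/
def degLE (f : H) (d : ℤ) : Prop := ∀ k : ℤ, d < k → zc f k = 0

/-- The element `z` of `H`. -/
def zH : H := HahnSeries.single (-1 : ℤ) (1 : ℂ)

/-- Multiplication by `z` as a `ℂ`-linear endomorphism of `H`. -/
def Mz : H →ₗ[ℂ] H where
  toFun f := zH * f
  map_add' f g := mul_add zH f g
  map_smul' c f := by
    simp only [RingHom.id_apply, ← HahnSeries.single_zero_mul_eq_smul]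
    ring

/-- The derivative `d/dz` as a `ℂ`-linear endomorphism of `H`. -/
def Dz : H →ₗ[ℂ] H where
  toFun f :=
    { coeff := fun n => ((1 - n : ℤ) : ℂ) * f.coeff (n - 1)
      isPWO_support' := by
        refine Set.IsPWO.mono (Set.IsPWO.image_of_monotone f.isPWO_support'
          (f := fun m : ℤ => m + 1) (fun a b hab => by dsimp only; omega)) ?_
        intro n hn
        simp only [Function.mem_support] at hn
        refine ⟨n - 1, ?_, by ring⟩
        intro h
        exact hn (by rw [h, mul_zero]) }
  map_add' f g := by
    ext n
    simp [HahnSeries.coeff_add, mul_add]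
  map_smul' c f := by
    ext n
    simp [HahnSeries.coeff_smul]
    ring

/-- `H₊ = ℂ[z]`: series with no negative powers of `z`. -/
def Hplus : Submodule ℂ H where
  carrier := {f | ∀ k : ℤ, k < 0 → zc f k = 0}
  add_mem' := by
    intro f g hf hg k hk
    simp only [Set.mem_setOf_eq, zc, HahnSeries.coeff_add] at *
    rw [hf k hk, hg k hk, add_zero]
  zero_mem' := by intro k hk; simp [zc]
  smul_mem' := by
    intro c f hf k hk
    simp only [Set.mem_setOf_eq, zc, HahnSeries.coeff_smul] at *
    rw [hf k hk, smul_zero]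

/-- `H₋ = z⁻¹ℂ[[z⁻¹]]`: series with only negative powers of `z`. -/
def Hminus : Submodule ℂ H where
  carrier := {f | ∀ k : ℤ, 0 ≤ k → zc f k = 0}
  add_mem' := by
    intro f g hf hg k hk
    simp only [Set.mem_setOf_eq, zc, HahnSeries.coeff_add] at *
    rw [hf k hk, hg k hk, add_zero]
  zero_mem' := by intro k hk; simp [zc]
  smul_mem' := by
    intro c f hf k hk
    simp only [Set.mem_setOf_eq, zc, HahnSeries.coeff_smul] at *
    rw [hf k hk, smul_zero]

/-- The projection `π₊ : H → H₊` discarding all negative powers of `z`. -/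
def piPlus : H →ₗ[ℂ] H where
  toFun f :=
    { coeff := fun n => if 0 < n then 0 else f.coeff n
      isPWO_support' := by
        refine Set.IsPWO.mono f.isPWO_support' ?_
        intro n hn
        simp only [Function.mem_support] at hn
        by_cases h : 0 < n
        · exact absurd (if_pos h) hn
        · rw [if_neg h] at hn; exact hn }
  map_add' f g := by
    ext n
    by_cases h : 0 < n <;> simp [HahnSeries.coeff_add, h]
  map_smul' c f := by
    ext n
    by_cases h : 0 < n <;> simp [HahnSeries.coeff_smul, h]

/-- The statement that `A` is the operator `Σ_{k≥0} a_k (d/dz)^k`, where all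
`deg a_k ≤ e`: partial sums converge to `A f` coefficientwise. -/
def IsOp (a : ℕ → H) (e : ℤ) (A : H →ₗ[ℂ] H) : Prop :=
  (∀ k, degLE (a k) e) ∧
  ∀ (f : H) (d : ℤ), degLE f d → ∀ N : ℕ,
    degLE (A f - ∑ k ∈ Finset.range N, a k * ((Dz ^ k) f)) (d + e - N)

/-- The operator `A` stabilizes the subspace `W`. -/
def Stab (A : H →ₗ[ℂ] H) (W : Submodule ℂ H) : Prop := ∀ f ∈ W, A f ∈ W

/-- The big cell of the Sato Grassmannian: `π₊` restricts to a bijection of `W` onto `ℂ[z]`. -/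
def BigCell (W : Submodule ℂ H) : Prop :=
  Set.BijOn piPlus (W : Set H) (Hplus : Set H)

/-- The pair `(P, Q)` belongs to `Gr_𝒟`. -/
def GrD (P Q : H →ₗ[ℂ] H) : Prop :=
  (∃ a : ℕ → H, IsOp a (-2) (P - Dz)) ∧
  (∃ b : ℕ → H, IsOp b (-1) (Q - Mz)) ∧
  P ∘ₗ Q - Q ∘ₗ P = LinearMap.id

open HahnSeries Finset

lemma zc_add (f g : H) (k : ℤ) : zc (f + g) k = zc f k + zc g k := rfl

lemma zc_sub (f g : H) (k : ℤ) : zc (f - g) k = zc f k - zc g k := rfl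

lemma zc_sum {ι : Type*} (s : Finset ι) (f : ι → H) (k : ℤ) :
    zc (∑ i ∈ s, f i) k = ∑ i ∈ s, zc (f i) k :=
  coeff_sum _

lemma zc_mul_single (f : H) (t : ℤ) (c : ℂ) (k : ℤ) :
    zc (f * single t c) k = zc f (k + t) * c := by
  rw [zc, zc, show -k = -(k + t) + t by ring, coeff_mul_single_add]

lemma degLE.mono {f : H} {d d' : ℤ} (hf : degLE f d) (h : d ≤ d') : degLE f d' :=
  fun k hk => hf k (h.trans_lt hk)

lemma degLE_add {f g : H} {d : ℤ} (hf : degLE f d) (hg : degLE g d) : degLE (f + g) d :=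
  fun k hk => by rw [zc_add, hf k hk, hg k hk, add_zero]

lemma degLE_sub {f g : H} {d : ℤ} (hf : degLE f d) (hg : degLE g d) : degLE (f - g) d :=
  fun k hk => by rw [zc_sub, hf k hk, hg k hk, sub_zero]

lemma exists_degLE (f : H) : ∃ d, degLE f d := by
  by_cases hf : f = 0
  · exact ⟨0, fun k _ => by rw [hf]; rfl⟩
  · exact ⟨-f.order, fun k hk => coeff_eq_zero_of_lt_order (by omega)⟩

lemma eq_zero_of_forall_degLE_sub {f : H} {d : ℤ} (h : ∀ N : ℕ, degLE f (d - N)) : f = 0 := by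
  ext x
  rw [← neg_neg x]
  exact h ((d + x).toNat + 1) (-x) (by omega)

lemma degLE_single (n : ℕ) : degLE (single (-(n : ℤ)) (1 : ℂ)) n :=
  fun k hk => coeff_single_of_ne (by omega)

lemma single_mem_Hplus (n : ℕ) : single (-(n : ℤ)) (1 : ℂ) ∈ Hplus :=
  fun k hk => coeff_single_of_ne (by omega)

lemma degLE_mul {f g : H} {d e : ℤ} (hf : degLE f d) (hg : degLE g e) :
    degLE (f * g) (d + e) := by
  intro k hk
  rw [zc, coeff_mul]
  refine sum_eq_zero fun ij hij => ?_
  rw [Finset.mem_antidiagonal] at hij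
  by_cases h : ij.1 < -d
  · rw [show f.coeff ij.1 = 0 by simpa [zc] using hf (-ij.1) (by omega), zero_mul]
  · rw [show g.coeff ij.2 = 0 by simpa [zc] using hg (-ij.2) (by omega), mul_zero]

lemma zc_Dz (f : H) (k : ℤ) : zc (Dz f) k = ((k + 1 : ℤ) : ℂ) * zc f (k + 1) := by
  change ((1 - -k : ℤ) : ℂ) * f.coeff (-k - 1) = _
  rw [zc, show -k - 1 = -(k + 1) by ring, sub_neg_eq_add, add_comm 1 k]

lemma degLE_Dz_pow {f : H} {d : ℤ} (hf : degLE f d) (k : ℕ) :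
    degLE ((Dz ^ k) f) (d - k) := by
  induction k with
  | zero => simpa using hf
  | succ k ih =>
    intro m hm
    rw [pow_succ', Module.End.mul_apply, zc_Dz, ih (m + 1) (by push_cast at hm; omega), mul_zero]

lemma Dz_single (t : ℤ) (c : ℂ) : Dz (single t c) = single (t + 1) ((-t : ℤ) * c) := by
  ext n
  change ((1 - n : ℤ) : ℂ) * (single t c).coeff (n - 1) = _
  by_cases h : n = t + 1
  · subst h
    rw [add_sub_cancel_right, coeff_single_same, coeff_single_same]
    push_cast
    ring
  · rw [coeff_single_of_ne (by omega), coeff_single_of_ne h, mul_zero]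

/-- `(d/dz)^k z^m = m (m - 1) ⋯ (m - k + 1) z^(m - k)`. -/
lemma Dz_pow_single (k : ℕ) (m : ℤ) (c : ℂ) :
    (Dz ^ k) (single (-m) c) = single (k - m) ((descPochhammer ℂ k).eval (m : ℂ) * c) := by
  induction k with
  | zero => simp
  | succ k ih =>
    rw [pow_succ', Module.End.mul_apply, ih, Dz_single, descPochhammer_succ_eval]
    congr 1 <;> push_cast <;> ring

section IsOp

variable {a : ℕ → H} {e : ℤ} {A : H →ₗ[ℂ] H}

lemma IsOp.degLE_apply (hA : IsOp a e A) (he : e ≤ 0) {j : ℕ}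
    (hj : ∀ k : ℕ, degLE (a k) (k - j)) {f : H} {d : ℤ} (hf : degLE f d) :
    degLE (A f) (d - j) := by
  have hsum : degLE (∑ k ∈ range j, a k * (Dz ^ k) f) (d - j) := by
    intro m hm
    rw [zc_sum]
    exact sum_eq_zero fun k _ => degLE_mul (hj k) (degLE_Dz_pow hf k) m (by omega)
  simpa using degLE_add ((hA.2 f d hf j).mono (by omega)) hsum

lemma IsOp.apply_single (hA : IsOp a e A) (n : ℕ) :
    A (single (-(n : ℤ)) 1) = ∑ k ∈ range (n + 1), a k * (Dz ^ k) (single (-(n : ℤ)) 1) := by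
  have htail (M : ℕ) : ∑ k ∈ range (n + 1 + M), a k * (Dz ^ k) (single (-(n : ℤ)) 1)
      = ∑ k ∈ range (n + 1), a k * (Dz ^ k) (single (-(n : ℤ)) 1) := by
    refine (sum_subset (range_subset_range.2 (by omega)) fun k _ hk => ?_).symm
    rw [Dz_pow_single, Int.cast_natCast, descPochhammer_eval_eq_descFactorial,
      Nat.descFactorial_eq_zero_iff_lt.2 (by simpa using hk), Nat.cast_zero, zero_mul,
      single_eq_zero, mul_zero]
  rw [← sub_eq_zero]
  refine eq_zero_of_forall_degLE_sub (d := e - 1) fun M => ?_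
  have h := hA.2 _ n (degLE_single n) (n + 1 + M)
  rw [htail] at h
  exact h.mono (by push_cast; omega)

lemma IsOp.zc_apply_single (hA : IsOp a e A) (n : ℕ) (m : ℤ) :
    zc (A (single (-(n : ℤ)) 1)) m
      = ∑ k ∈ range (n + 1), (n.descFactorial k : ℂ) * zc (a k) (m + k - n) := by
  rw [hA.apply_single, zc_sum]
  refine sum_congr rfl fun k _ => ?_
  rw [Dz_pow_single, Int.cast_natCast, descPochhammer_eval_eq_descFactorial, zc_mul_single,
    mul_one, mul_comm, add_sub_assoc]

lemma IsOp.eq_zero (hA : IsOp a e A) (ha : ∀ k, a k = 0) : A = 0 := by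
  ext f : 1
  obtain ⟨d, hf⟩ := exists_degLE f
  refine eq_zero_of_forall_degLE_sub (d := d + e) fun N => ?_
  simpa [ha] using hA.2 f d hf N

end IsOp

lemma zc_piPlus_of_nonneg (f : H) {k : ℤ} (hk : 0 ≤ k) : zc (piPlus f) k = zc f k :=
  if_neg (by omega)

lemma BigCell.eq_zero_of_degLE {W : Submodule ℂ H} (hW : BigCell W) {w : H} (hw : w ∈ W)
    (hdeg : degLE w (-1)) : w = 0 := by
  refine hW.injOn hw W.zero_mem ?_
  ext x
  rw [map_zero, coeff_zero]
  by_cases hx : 0 < x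
  · exact if_pos hx
  · rw [← neg_neg x]
    exact (zc_piPlus_of_nonneg w (by omega)).trans (hdeg _ (by omega))

lemma BigCell.exists_mem_sub_single_degLE {W : Submodule ℂ H} (hW : BigCell W) (n : ℕ) :
    ∃ w ∈ W, degLE w n ∧ degLE (w - single (-(n : ℤ)) 1) (-1) := by
  obtain ⟨w, hw, hpw⟩ := hW.surjOn (single_mem_Hplus n)
  have hdiff : degLE (w - single (-(n : ℤ)) 1) (-1) := fun k hk => by
    rw [← hpw, zc_sub, ← zc_piPlus_of_nonneg w (by omega), sub_self]
  have hwdeg := degLE_add (hdiff.mono (by omega : (-1 : ℤ) ≤ n)) (degLE_single n)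
  rw [sub_add_cancel] at hwdeg
  exact ⟨w, hw, hwdeg, hdiff⟩

/-- The matrix `(n.descFactorial k)` is lower triangular with diagonal entries `n !`. -/
lemma eq_zero_of_sum_descFactorial_mul_eq_zero {R : Type*} [CommRing R] [IsDomain R]
    [CharZero R] {c : ℕ → R} (j : ℕ) (hc : ∀ n, j ≤ n → c n = 0)
    (hsum : ∀ n < j, ∑ k ∈ range (n + 1), (n.descFactorial k : R) * c k = 0) (n : ℕ) :
    c n = 0 := by
  induction n using Nat.strong_induction_on with
  | _ n ih =>
    by_cases hn : j ≤ n
    · exact hc n hn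
    have h := hsum n (by omega)
    rw [sum_range_succ, sum_eq_zero fun k hk => by rw [ih k (mem_range.1 hk), mul_zero],
      zero_add, Nat.descFactorial_self] at h
    exact (mul_eq_zero.1 h).resolve_left (Nat.cast_ne_zero.2 n.factorial_ne_zero)

section Stab

variable {W : Submodule ℂ H} {a : ℕ → H} {A : H →ₗ[ℂ] H}

lemma degLE_coeff_succ_of_stab (hW : BigCell W) (hA : IsOp a (-1) A) (hstab : Stab A W)
    {j : ℕ} (hj : ∀ k : ℕ, degLE (a k) (k - j)) (k : ℕ) : degLE (a k) (k - (j + 1 : ℕ)) := by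
  suffices hc : ∀ k : ℕ, zc (a k) (k - j) = 0 by
    intro m hm
    rcases eq_or_lt_of_le (show (k : ℤ) - j ≤ m by push_cast at hm; omega) with h | h
    · rw [← h, hc]
    · exact hj k m h
  refine eq_zero_of_sum_descFactorial_mul_eq_zero j (fun n hn => hA.1 n _ (by omega)) ?_
  intro n hn
  obtain ⟨w, hw, hwdeg, hdiff⟩ := hW.exists_mem_sub_single_degLE n
  have hAw : A w = 0 :=
    hW.eq_zero_of_degLE (hstab w hw) ((hA.degLE_apply (by norm_num) hj hwdeg).mono (by omega))
  have hAdiff := hA.degLE_apply (by norm_num) hj hdiff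
  -- `A z^n = -A (w - z^n)` has no term `z^(n - j)`, which gives the `n`-th equation.
  have hAsingle : degLE (A (single (-(n : ℤ)) 1)) (-1 - j) := by
    have h := degLE_sub (f := A w) (fun _ _ => by rw [hAw]; rfl) hAdiff
    rwa [← map_sub, sub_sub_cancel] at h
  rw [← hAsingle (n - j) (by omega), hA.zc_apply_single]
  exact sum_congr rfl fun k _ => by rw [show (n : ℤ) - j + k - n = k - j by ring]

lemma degLE_coeff_of_stab (hW : BigCell W) (hA : IsOp a (-1) A) (hstab : Stab A W) (j k : ℕ) :
    degLE (a k) (k - j) := by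
  induction j generalizing k with
  | zero => exact (hA.1 k).mono (by omega)
  | succ j ih => exact degLE_coeff_succ_of_stab hW hA hstab ih k

end Stab

/-- For any point of the big cell there are no nontrivial Kac–Schwarz
operators in `𝒟₋`. -/
theorem no_negative_KS_operators (W : Submodule ℂ H) (hW : BigCell W)
    (a : ℕ → H) (A : H →ₗ[ℂ] H) (hA : IsOp a (-1) A) (hstab : Stab A W) :
    A = 0 ∧ ∀ k, a k = 0 := by
  have ha : ∀ k, a k = 0 := fun k =>
    eq_zero_of_forall_degLE_sub fun j => degLE_coeff_of_stab hW hA hstab j k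
  exact ⟨hA.eq_zero ha, ha⟩
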